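/- arXiv:1809.06040 — 3 statements merged into one kernel-verified Lean document; each statement's English description precedes it below -/
import Mathlib

section
/- Let K ≥ 2 and 1 ≤ N_r ≤ N ≤ K be integers. Let X_1, …, X_{N_r} be independent random variables on a probability space, each uniformly distributed on a set of K arms (e.g. Fin K), and let S be a fixed set of arms with |S| = N − N_r (the arms occupied by sequentially-hopping players). Then the probability of the event {X_1 ∉ S and X_j ≠ X_1 for all j = 2, …, N_r} is at least (1 − 1/K)^(N−1) / K, which is at least 1/(4K). -/
open MeasureTheory ProbabilityTheory Finset
open scoped ENNReal

/- The event splits along the arm `a ∉ S` chosen by player 1. For each such `a`, independence gives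
probability `(1/K) (1 - 1/K)^(N_r - 1)` that player 1 picks `a` and the other `N_r - 1` random
players avoid it; since `|S| < K` at least one arm is free, so the probability is at least
`(1/K) (1 - 1/K)^(N_r - 1) ≥ (1/K) (1 - 1/K)^(N - 1)`. Finally `(1 - 1/K)^(K-1) ≥ 1/e ≥ 1/4`. -/

lemma inv_four_le_one_sub_one_div_pow (n : ℕ) : (4 : ℝ)⁻¹ ≤ (1 - 1 / (n : ℝ)) ^ (n - 1) := by
  rcases n with _ | m
  · norm_num
  rcases m.eq_zero_or_pos with rfl | hm
  · norm_num
  have hinv : 1 - 1 / ((m + 1 : ℕ) : ℝ) = (1 + (m : ℝ)⁻¹)⁻¹ := by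
    field_simp
    push_cast
    ring
  rw [Nat.add_sub_cancel, hinv, inv_pow]
  gcongr
  exact Real.one_add_inv_pow_le_exp.trans (Real.exp_one_lt_d9.le.trans (by norm_num))

section

variable {Ω β : Type*} [MeasurableSpace Ω] {μ : Measure Ω} [MeasurableSpace β]
  [MeasurableSingletonClass β]

lemma MeasureTheory.measure_preimage_finset_inter {f : Ω → β} (hf : Measurable f)
    (T : Finset β) (E : Set Ω) :
    μ (f ⁻¹' T ∩ E) = ∑ b ∈ T, μ (f ⁻¹' {b} ∩ E) := by
  have hfib : ∀ b, MeasurableSet (f ⁻¹' {b}) := fun b => hf (measurableSet_singleton b)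
  simp_rw [← Measure.restrict_apply (hfib _), ← Measure.restrict_apply (hf T.measurableSet)]
  exact (sum_measure_preimage_singleton T fun b _ => hfib b).symm

end

namespace ProbabilityTheory.iIndepFun

variable {Ω ι β : Type*} [MeasurableSpace Ω] {μ : Measure Ω} [IsProbabilityMeasure μ]
  [MeasurableSpace β] [MeasurableSingletonClass β] [Fintype ι] [DecidableEq ι]
  {X : ι → Ω → β}

lemma measure_eq_and_forall_ne_eq (hX : iIndepFun X μ) (hmeas : ∀ i, Measurable (X i))
    (i₀ : ι) (a : β) :
    μ {ω | X i₀ ω = a ∧ ∀ j ≠ i₀, X j ω ≠ a} =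
      μ {ω | X i₀ ω = a} * ∏ j ∈ univ.erase i₀, (1 - μ {ω | X j ω = a}) := by
  let s : ι → Set β := fun i => if i = i₀ then {a} else {a}ᶜ
  have hevent : {ω | X i₀ ω = a ∧ ∀ j ≠ i₀, X j ω ≠ a} = ⋂ i, X i ⁻¹' s i := by
    ext ω
    simp only [Set.mem_ofPred_eq, Set.mem_iInter, Set.mem_preimage, s]
    grind
  rw [hevent, hX.meas_iInter fun i => ⟨s i, by simp only [s]; split_ifs <;> simp, rfl⟩,
    ← mul_prod_erase univ _ (mem_univ i₀)]
  refine congrArg₂ _ (by simp only [s, if_pos rfl]; rfl) (prod_congr rfl fun j hj => ?_)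
  simp only [s, if_neg (ne_of_mem_erase hj)]
  rw [Set.preimage_compl, prob_compl_eq_one_sub (hmeas j (measurableSet_singleton a))]
  rfl

theorem measure_mem_and_forall_ne_eq (hX : iIndepFun X μ)
    (hmeas : ∀ i, Measurable (X i)) {p : ℝ≥0∞} (hunif : ∀ i a, μ {ω | X i ω = a} = p)
    (i₀ : ι) (T : Finset β) :
    μ {ω | X i₀ ω ∈ T ∧ ∀ j ≠ i₀, X j ω ≠ X i₀ ω} =
      #T * (p * (1 - p) ^ (Fintype.card ι - 1)) := by
  change μ (X i₀ ⁻¹' T ∩ {ω | ∀ j ≠ i₀, X j ω ≠ X i₀ ω}) = _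
  rw [measure_preimage_finset_inter (hmeas i₀), sum_congr rfl fun b _ => ?_, sum_const,
    nsmul_eq_mul]
  change μ {ω | X i₀ ω = b ∧ ∀ j ≠ i₀, X j ω ≠ X i₀ ω} = _
  have hfiber : {ω | X i₀ ω = b ∧ ∀ j ≠ i₀, X j ω ≠ X i₀ ω} =
      {ω | X i₀ ω = b ∧ ∀ j ≠ i₀, X j ω ≠ b} := by
    ext ω
    simp only [Set.mem_ofPred_eq]
    exact and_congr_right fun h => by rw [h]
  rw [hfiber, hX.measure_eq_and_forall_ne_eq hmeas, hunif, prod_congr rfl fun j _ => by rw [hunif],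
    prod_const, card_erase_of_mem (mem_univ i₀), card_univ]

end ProbabilityTheory.iIndepFun

theorem stmt_1_general {Ω : Type*} [MeasurableSpace Ω] (μ : Measure Ω)
    [IsProbabilityMeasure μ]
    (K N Nr : ℕ) (hNr : 1 ≤ Nr) (hNrN : Nr ≤ N) (hNK : N ≤ K)
    (X : Fin Nr → Ω → Fin K) (hmeas : ∀ i, Measurable (X i))
    (hindep : iIndepFun X μ)
    (hunif : ∀ i a, μ {ω | X i ω = a} = 1 / K)
    (S : Finset (Fin K)) (hS : S.card = N - Nr) :
    μ {ω | X ⟨0, hNr⟩ ω ∉ S ∧ ∀ j, j ≠ ⟨0, hNr⟩ → X j ω ≠ X ⟨0, hNr⟩ ω} ≥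
      ENNReal.ofReal ((1 - 1 / (K : ℝ)) ^ (N - 1) / (K : ℝ)) ∧
    ENNReal.ofReal ((1 - 1 / (K : ℝ)) ^ (N - 1) / (K : ℝ)) ≥
      ENNReal.ofReal (1 / (4 * (K : ℝ))) := by
  have hK : (0 : ℝ) < K := by exact_mod_cast (show 0 < K by omega)
  have hq₀ : 0 ≤ 1 - 1 / (K : ℝ) := sub_nonneg.2 ((div_le_one hK).2 (by exact_mod_cast (by omega)))
  have hq₁ : 1 - 1 / (K : ℝ) ≤ 1 := sub_le_self _ (by positivity)
  have hfree : (1 : ℝ) ≤ #Sᶜ := by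
    rw [card_compl, hS, Fintype.card_fin]
    exact_mod_cast (by omega)
  have hp : (1 / K : ℝ≥0∞) = ENNReal.ofReal (1 / K) := by
    rw [ENNReal.ofReal_div_of_pos hK, ENNReal.ofReal_one, ENNReal.ofReal_natCast]
  refine ⟨?_, ENNReal.ofReal_le_ofReal ?_⟩
  · simp_rw [← mem_compl (s := S)]
    rw [ge_iff_le, hindep.measure_mem_and_forall_ne_eq hmeas hunif, Fintype.card_fin, hp,
      ← ENNReal.ofReal_one, ← ENNReal.ofReal_sub _ (by positivity), ← ENNReal.ofReal_pow hq₀,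
      ← ENNReal.ofReal_mul (by positivity), ← ENNReal.ofReal_natCast,
      ← ENNReal.ofReal_mul (by positivity)]
    refine ENNReal.ofReal_le_ofReal ?_
    calc (1 - 1 / (K : ℝ)) ^ (N - 1) / K ≤ 1 / K * (1 - 1 / (K : ℝ)) ^ (Nr - 1) := by
          rw [one_div_mul_eq_div]
          exact div_le_div_of_nonneg_right (pow_le_pow_of_le_one hq₀ hq₁ (by omega)) hK.le
      _ ≤ _ := le_mul_of_one_le_left (by positivity) hfree
  · calc 1 / (4 * (K : ℝ)) = (4 : ℝ)⁻¹ / K := by ring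
      _ ≤ (1 - 1 / (K : ℝ)) ^ (K - 1) / K := by gcongr; exact inv_four_le_one_sub_one_div_pow K
      _ ≤ _ := div_le_div_of_nonneg_right (pow_le_pow_of_le_one hq₀ hq₁ (by omega)) hK.le

/-- One round of the random-hopping sub-phase: `N_r` players choose arms
independently and uniformly at random from `K` arms while the other
`N − N_r` players occupy a fixed set `S` with `|S| = N − N_r`; the
probability that player `0` is collision free (her arm is not in `S` and no
other random player picks it) is at least `(1 − 1/K)^(N−1)/K ≥ 1/(4K)`. -/
theorem stmt_1 {Ω : Type*} [MeasurableSpace Ω] (μ : Measure Ω)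
    [IsProbabilityMeasure μ]
    (K N Nr : ℕ) (hK : 2 ≤ K) (hNr : 1 ≤ Nr) (hNrN : Nr ≤ N) (hNK : N ≤ K)
    (X : Fin Nr → Ω → Fin K) (hmeas : ∀ i, Measurable (X i))
    (hindep : iIndepFun X μ)
    (hunif : ∀ i a, μ {ω | X i ω = a} = 1 / K)
    (S : Finset (Fin K)) (hS : S.card = N - Nr) :
    μ {ω | X ⟨0, hNr⟩ ω ∉ S ∧ ∀ j, j ≠ ⟨0, hNr⟩ → X j ω ≠ X ⟨0, hNr⟩ ω} ≥
      ENNReal.ofReal ((1 - 1 / (K : ℝ)) ^ (N - 1) / (K : ℝ)) ∧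
    ENNReal.ofReal ((1 - 1 / (K : ℝ)) ^ (N - 1) / (K : ℝ)) ≥
      ENNReal.ofReal (1 / (4 * (K : ℝ))) :=
  stmt_1_general μ K N Nr hNr hNrN hNK X hmeas hindep hunif S hS
end

section
/- For all integers K, N with 1 ≤ N ≤ K, the quantity (∑_{k=1}^{K−(N−1)} (K − k)) + 1 equals (K(K−1) − (N−1)(N−2))/2 + 1 and is at most (K² − (N−1)²)/2 + 1. Hence in the trekking phase of the Static Trekking algorithm, all N players settle on the top N arms in at most T_tr := (K² − (N−1)²)/2 + 1 rounds. -/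
lemma aux_sum (K M : ℕ) :
    (∑ k ∈ Finset.Icc 1 M, ((K : ℝ) - (k : ℝ))) = M * K - M * (M + 1) / 2 := by
  induction M with
  | zero => simp
  | succ m ih =>
      rw [Finset.sum_Icc_succ_top (by omega)]
      push_cast
      rw [ih]
      ring

/-- For all integers `1 ≤ N ≤ K`, the quantity `(∑_{k=1}^{K−(N−1)} (K − k)) + 1`
equals `(K(K−1) − (N−1)(N−2))/2 + 1` and is at most
`T_tr := (K² − (N−1)²)/2 + 1`, the bound on the length of the trekking phase
of the Static Trekking algorithm with `K` arms and `N` players. -/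
theorem stmt_7 (K N : ℕ) (hN : 1 ≤ N) (hNK : N ≤ K) :
    (∑ k ∈ Finset.Icc 1 (K - (N - 1)), ((K : ℝ) - (k : ℝ))) + 1 =
      ((K : ℝ) * ((K : ℝ) - 1) - ((N : ℝ) - 1) * ((N : ℝ) - 2)) / 2 + 1 ∧
    (∑ k ∈ Finset.Icc 1 (K - (N - 1)), ((K : ℝ) - (k : ℝ))) + 1 ≤
      ((K : ℝ) ^ 2 - ((N : ℝ) - 1) ^ 2) / 2 + 1 := by
  rw [aux_sum]
  have h1 : ((K - (N - 1) : ℕ) : ℝ) = (K : ℝ) - ((N : ℝ) - 1) := by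
    have : K - (N - 1) = K - N + 1 := by omega
    rw [this]
    push_cast [hNK]
    ring
  rw [h1]
  constructor
  · ring
  · have hK : (1 : ℝ) ≤ (N : ℝ) := by exact_mod_cast hN
    nlinarith [sq_nonneg ((N : ℝ) - 1)]
end

section
/- Let K ≥ 2, N ≥ 2, T ≥ 1 be integers and let (X_{j,t}) for j ∈ {0,…,N−1}, t ∈ {0,…,T−1} be mutually independent random variables, each uniformly distributed on a set of K arms. Let C be the number of pairs (j,t) such that there exists j' ≠ j with X_{j',t} = X_{j,t}. Then E[C] = N·T·(1 − (1 − 1/K)^{N−1}) ≥ N·T/K. -/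
/-!
By linearity of expectation, `E[C]` is the sum over all pairs `(j, t)` of the probability that
player `j` collides in round `t`. Player `j` avoids a collision exactly when every other player of
round `t` misses the arm `a` chosen by `j`; splitting over `a` and using independence, this has
probability `∑ₐ (1/K) (1 - 1/K)^(N-1) = (1 - 1/K)^(N-1)`. The lower bound is
`(1 - 1/K)^(N-1) ≤ 1 - 1/K`, valid as soon as `N ≥ 2`.
-/

open MeasureTheory ProbabilityTheory
open Finset
open scoped ENNReal

theorem le_one_sub_one_sub_pow {x : ℝ} (hx₀ : 0 ≤ x) (hx₁ : x ≤ 1) {n : ℕ} (hn : n ≠ 0) :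
    x ≤ 1 - (1 - x) ^ n := by
  linarith [pow_le_of_le_one (sub_nonneg.2 hx₁) (sub_le_self 1 hx₀) hn]

section

variable {Ω : Type*} [MeasurableSpace Ω] {μ : Measure Ω}

theorem integral_card_filter {ι : Type*} [Fintype ι] [IsFiniteMeasure μ] {P : ι → Ω → Prop}
    [∀ ω, DecidablePred (P · ω)] (hP : ∀ i, MeasurableSet {ω | P i ω}) :
    ∫ ω, (#{i | P i ω} : ℝ) ∂μ = ∑ i, μ.real {ω | P i ω} := by
  have hcard (ω : Ω) : (#{i | P i ω} : ℝ) = ∑ i, {ω | P i ω}.indicator 1 ω := by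
    simp only [natCast_card_filter, Set.indicator_apply, Set.mem_ofPred_eq, Pi.one_apply]
  simp_rw [hcard]
  rw [integral_finsetSum _ fun i _ => (integrable_const 1).indicator (hP i)]
  simp_rw [integral_indicator_one (hP _)]

theorem measurableSet_exists_ne_eq {ι α : Type*} [Countable ι] [MeasurableSpace α]
    [MeasurableSingletonClass α] [Countable α] {Y : ι → Ω → α} (hY : ∀ j, Measurable (Y j))
    (i : ι) : MeasurableSet {ω | ∃ j ≠ i, Y j ω = Y i ω} :=
  measurableSet_setOfPred.2 <| .exists fun j =>
    measurable_const.and (measurableSet_setOfPred.1 (measurableSet_eq_fun (hY j) (hY i)))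

namespace ProbabilityTheory

theorem iIndepFun.measure_forall_ne_eq_sum {ι α : Type*} [Fintype ι] [DecidableEq ι] [Fintype α]
    [MeasurableSpace α] [MeasurableSingletonClass α] {Y : ι → Ω → α}
    (hY : ∀ j, Measurable (Y j)) (hind : iIndepFun Y μ) (i : ι) :
    μ {ω | ∀ j ≠ i, Y j ω ≠ Y i ω} =
      ∑ a, μ (Y i ⁻¹' {a}) * ∏ j ∈ univ.erase i, μ (Y j ⁻¹' {a}ᶜ) := by
  let s : α → ι → Set α := fun a j => if j = i then {a} else {a}ᶜ
  have hdecomp :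
      {ω | ∀ j ≠ i, Y j ω ≠ Y i ω} = ⋃ a, ⋂ j ∈ (univ : Finset ι), Y j ⁻¹' s a j := by
    ext ω
    simp only [Set.mem_ofPred_eq, Set.mem_iUnion, Set.mem_iInter, Set.mem_preimage, s]
    constructor
    · intro h
      refine ⟨Y i ω, fun j _ => ?_⟩
      split_ifs with hj
      · simp [hj]
      · exact h j hj
    · rintro ⟨a, ha⟩ j hj
      have hi : Y i ω = a := by simpa using ha i (mem_univ _)
      have hj' : Y j ω ≠ a := by simpa [hj] using ha j (mem_univ _)
      rwa [hi]
  have hdisj :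
      Pairwise (Function.onFun Disjoint fun a => ⋂ j ∈ (univ : Finset ι), Y j ⁻¹' s a j) := by
    intro a b hab
    refine Set.disjoint_left.2 fun ω ha hb => hab ?_
    have ha : Y i ω = a := by simpa [s] using Set.mem_iInter₂.1 ha i (mem_univ _)
    have hb : Y i ω = b := by simpa [s] using Set.mem_iInter₂.1 hb i (mem_univ _)
    rw [← ha, hb]
  have hmeas (a : α) : MeasurableSet (⋂ j ∈ (univ : Finset ι), Y j ⁻¹' s a j) :=
    .biInter (univ : Finset ι).countable_toSet fun j _ => hY j .of_discrete
  rw [hdecomp, measure_iUnion hdisj hmeas, tsum_fintype]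
  refine sum_congr rfl fun a _ => ?_
  rw [hind.measure_inter_preimage_eq_mul _ fun j _ => .of_discrete,
    ← mul_prod_erase _ _ (mem_univ i)]
  simp only [s, if_pos rfl]
  congr 1
  exact prod_congr rfl fun j hj => by rw [if_neg (ne_of_mem_erase hj)]

theorem iIndepFun.measure_forall_ne_of_uniform [IsProbabilityMeasure μ] {ι α : Type*} [Fintype ι]
    [DecidableEq ι] [Fintype α] [MeasurableSpace α] [MeasurableSingletonClass α] {Y : ι → Ω → α}
    (hY : ∀ j, Measurable (Y j)) (hind : iIndepFun Y μ)
    (hunif : ∀ j a, μ (Y j ⁻¹' {a}) = (Fintype.card α : ℝ≥0∞)⁻¹) (i : ι) :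
    μ {ω | ∀ j ≠ i, Y j ω ≠ Y i ω} = (1 - (Fintype.card α : ℝ≥0∞)⁻¹) ^ (Fintype.card ι - 1) := by
  have : Nonempty α := ⟨Y i (nonempty_of_isProbabilityMeasure μ).some⟩
  have hcard : (Fintype.card α : ℝ≥0∞) ≠ 0 := by simp
  have hcompl (j : ι) (a : α) : μ (Y j ⁻¹' {a}ᶜ) = 1 - (Fintype.card α : ℝ≥0∞)⁻¹ := by
    rw [Set.preimage_compl, prob_compl_eq_one_sub (hY j (.singleton a)), hunif]
  simp only [hind.measure_forall_ne_eq_sum hY i, hcompl, hunif, prod_const,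
    card_erase_of_mem (mem_univ i), sum_const, card_univ, nsmul_eq_mul, ← mul_assoc,
    ENNReal.mul_inv_cancel hcard (ENNReal.natCast_ne_top _), one_mul]

theorem iIndepFun.measureReal_exists_ne_eq_of_uniform [IsProbabilityMeasure μ] {ι α : Type*}
    [Fintype ι] [DecidableEq ι] [Fintype α] [MeasurableSpace α] [MeasurableSingletonClass α]
    {Y : ι → Ω → α} (hY : ∀ j, Measurable (Y j)) (hind : iIndepFun Y μ)
    (hunif : ∀ j a, μ (Y j ⁻¹' {a}) = (Fintype.card α : ℝ≥0∞)⁻¹) (i : ι) :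
    μ.real {ω | ∃ j ≠ i, Y j ω = Y i ω} =
      1 - (1 - (Fintype.card α : ℝ)⁻¹) ^ (Fintype.card ι - 1) := by
  have hcompl : {ω | ∃ j ≠ i, Y j ω = Y i ω}ᶜ = {ω | ∀ j ≠ i, Y j ω ≠ Y i ω} := by
    ext; simp
  have hinv : (Fintype.card α : ℝ≥0∞)⁻¹ ≤ 1 := by
    have : Nonempty α := ⟨Y i (nonempty_of_isProbabilityMeasure μ).some⟩
    simpa using Nat.one_le_iff_ne_zero.2 Fintype.card_ne_zero
  have h := probReal_compl_eq_one_sub (μ := μ) (measurableSet_exists_ne_eq hY i)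
  rw [hcompl, measureReal_def, hind.measure_forall_ne_of_uniform hY hunif i, ENNReal.toReal_pow,
    ENNReal.toReal_sub_of_le hinv ENNReal.one_ne_top, ENNReal.toReal_inv] at h
  simp only [ENNReal.toReal_one, ENNReal.toReal_natCast] at h
  linarith

end ProbabilityTheory

end

theorem stmt_10_general {Ω : Type*} [MeasurableSpace Ω] (μ : Measure Ω)
    [IsProbabilityMeasure μ]
    (K N T : ℕ) (hK : 2 ≤ K) (hN : 2 ≤ N)
    (X : Fin N × Fin T → Ω → Fin K) (hmeas : ∀ p, Measurable (X p))
    (hindep : iIndepFun X μ)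
    (hunif : ∀ p a, μ {ω | X p ω = a} = 1 / K) :
    (∫ ω, ((Finset.univ.filter
        (fun p : Fin N × Fin T =>
          ∃ j' : Fin N, j' ≠ p.1 ∧ X (j', p.2) ω = X p ω)).card : ℝ) ∂μ) =
      (N : ℝ) * (T : ℝ) * (1 - (1 - 1 / (K : ℝ)) ^ (N - 1)) ∧
    (N : ℝ) * (T : ℝ) * (1 - (1 - 1 / (K : ℝ)) ^ (N - 1)) ≥
      (N : ℝ) * (T : ℝ) / (K : ℝ) := by
  have hround (t : Fin T) : iIndepFun (fun j : Fin N => X (j, t)) μ :=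
    hindep.precomp (Prod.mk_left_injective t)
  have hcollision (p : Fin N × Fin T) :
      μ.real {ω | ∃ j' ≠ p.1, X (j', p.2) ω = X p ω} = 1 - (1 - 1 / (K : ℝ)) ^ (N - 1) := by
    simpa using (hround p.2).measureReal_exists_ne_eq_of_uniform (fun j => hmeas _)
      (fun j a => by rw [Fintype.card_fin, ← one_div]; exact hunif (j, p.2) a) p.1
  refine ⟨?_, ?_⟩
  · rw [integral_card_filter (P := fun p ω => ∃ j' ≠ p.1, X (j', p.2) ω = X p ω)
      fun p => measurableSet_exists_ne_eq (fun j => hmeas (j, p.2)) p.1]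
    simp only [hcollision, sum_const, card_univ, Fintype.card_prod, Fintype.card_fin, nsmul_eq_mul]
    push_cast
    ring
  · have hK₁ : 1 / (K : ℝ) ≤ 1 := by
      rw [div_le_one (by positivity)]
      exact_mod_cast (by omega : 1 ≤ K)
    calc (N : ℝ) * T / K = N * T * (1 / K) := by ring
      _ ≤ N * T * (1 - (1 - 1 / K) ^ (N - 1)) :=
        mul_le_mul_of_nonneg_left (le_one_sub_one_sub_pow (by positivity) hK₁ (by omega))
          (by positivity)

/-- Collision count of the Musical Chairs learning phase: each of `N` players
selects, in each of `T` rounds, an arm independently and uniformly at random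
from `K` arms; `C ω` counts the pairs `(j,t)` for which some other player
`j' ≠ j` selects the same arm as player `j` in round `t`.  Then
`E[C] = N·T·(1 − (1 − 1/K)^{N−1}) ≥ N·T/K`. -/
theorem stmt_10 {Ω : Type*} [MeasurableSpace Ω] (μ : Measure Ω)
    [IsProbabilityMeasure μ]
    (K N T : ℕ) (hK : 2 ≤ K) (hN : 2 ≤ N) (hT : 1 ≤ T)
    (X : Fin N × Fin T → Ω → Fin K) (hmeas : ∀ p, Measurable (X p))
    (hindep : iIndepFun X μ)
    (hunif : ∀ p a, μ {ω | X p ω = a} = 1 / K) :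
    (∫ ω, ((Finset.univ.filter
        (fun p : Fin N × Fin T =>
          ∃ j' : Fin N, j' ≠ p.1 ∧ X (j', p.2) ω = X p ω)).card : ℝ) ∂μ) =
      (N : ℝ) * (T : ℝ) * (1 - (1 - 1 / (K : ℝ)) ^ (N - 1)) ∧
    (N : ℝ) * (T : ℝ) * (1 - (1 - 1 / (K : ℝ)) ^ (N - 1)) ≥
      (N : ℝ) * (T : ℝ) / (K : ℝ) :=
  stmt_10_general μ K N T hK hN X hmeas hindep hunif
end
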